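/- Let d ≥ 1, l > 0, and let p be a probability distribution on ℤ^d \ {0} such that M_l := Σ_{r≠0} p(r)(1+|r|)^l < ∞, where |r| denotes a norm on ℤ^d. Then for every n ≥ 1 and every R > 0, Σ over (r_1,…,r_n) with r_1+⋯+r_n = 0 and |r_1+⋯+r_k| ≥ R for some 1 ≤ k ≤ n of ∏_{i=1}^n p(r_i) is at most n · M_l^n · (1+R)^{-l}. -/
import Mathlib


/-- The sup norm of a lattice vector, viewed in `Fin d → ℝ`. -/
noncomputable def znorm {d : ℕ} (r : Fin d → ℤ) : ℝ :=
  ‖(fun i => (r i : ℝ) : Fin d → ℝ)‖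

lemma znorm_nonneg {d : ℕ} (r : Fin d → ℤ) : 0 ≤ znorm r := norm_nonneg _

lemma znorm_add_le {d : ℕ} (a b : Fin d → ℤ) : znorm (a + b) ≤ znorm a + znorm b := by
  have h : (fun i => ((a + b) i : ℝ)) = (fun i => (a i : ℝ)) + fun i => (b i : ℝ) := by
    funext i; simp
  unfold znorm
  rw [h]
  exact norm_add_le _ _

lemma one_add_znorm_sum_le {d n : ℕ} (v : Fin n → Fin d → ℤ) (s : Finset (Fin n)) :
    1 + znorm (∑ i ∈ s, v i) ≤ ∏ i ∈ s, (1 + znorm (v i)) := by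
  induction s using Finset.induction with
  | empty =>
    simp only [Finset.sum_empty, Finset.prod_empty]
    have : znorm (0 : Fin d → ℤ) = 0 := by
      unfold znorm
      have : (fun i => (((0 : Fin d → ℤ)) i : ℝ)) = (0 : Fin d → ℝ) := by funext i; simp
      rw [this, norm_zero]
    simp [this]
  | @insert a s' h ih =>
    rw [Finset.sum_insert h, Finset.prod_insert h]
    have h1 : 1 + znorm (v a + ∑ i ∈ s', v i) ≤ 1 + znorm (v a) + znorm (∑ i ∈ s', v i) := by
      linarith [znorm_add_le (v a) (∑ i ∈ s', v i)]
    have h2 : 1 + znorm (v a) + znorm (∑ i ∈ s', v i)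
        ≤ (1 + znorm (v a)) * (1 + znorm (∑ i ∈ s', v i)) := by
      nlinarith [znorm_nonneg (v a), znorm_nonneg (∑ i ∈ s', v i)]
    have h3 : (1 + znorm (v a)) * (1 + znorm (∑ i ∈ s', v i))
        ≤ (1 + znorm (v a)) * ∏ i ∈ s', (1 + znorm (v i)) := by
      apply mul_le_mul_of_nonneg_left ih
      linarith [znorm_nonneg (v a)]
    linarith

lemma hasSum_pi_prod {β : Type*} (g : β → ℝ) (hg : ∀ b, 0 ≤ g b) {S : ℝ} (hS : HasSum g S) :
    ∀ n : ℕ, HasSum (fun v : Fin n → β => ∏ i, g (v i)) (S ^ n) := by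
  intro n
  induction n with
  | zero =>
    have he : (fun v : Fin 0 → β => ∏ i, g (v i)) = fun _ => 1 := by funext v; simp
    rw [he, pow_zero]
    exact hasSum_single (f := fun _ : Fin 0 → β => (1 : ℝ)) (fun i => i.elim0)
      (fun b hb => (hb (funext fun i => i.elim0)).elim)
  | succ n ih =>
    have hsum : Summable fun x : β × (Fin n → β) => g x.1 * ∏ i, g (x.2 i) := by
      apply Summable.mul_of_nonneg hS.summable ih.summable
      · exact fun b => hg b
      · exact fun w => Finset.prod_nonneg fun i _ => hg _
    have hmul := hS.mul ih hsum
    rw [pow_succ, mul_comm (S ^ n) S]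
    apply (Equiv.hasSum_iff (Fin.consEquiv (fun _ : Fin (n + 1) => β))).mp
    have : ((fun v : Fin (n + 1) → β => ∏ i, g (v i))
          ∘ (Fin.consEquiv (fun _ : Fin (n + 1) => β)))
        = fun x : β × (Fin n → β) => g x.1 * ∏ i, g (x.2 i) := by
      funext x
      simp [Fin.prod_univ_succ, Fin.consEquiv]
    rw [this]
    exact hmul

theorem stmt4 (d : ℕ) (hd : 1 ≤ d) (l : ℝ) (hl : 0 < l)
    (p : (Fin d → ℤ) → ℝ) (hp : ∀ r, 0 ≤ p r) (hp0 : p 0 = 0)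
    (hprob : HasSum p 1) (Ml : ℝ)
    (hMl : HasSum (fun r : (Fin d → ℤ) => p r * (1 + znorm r) ^ l) Ml)
    (n : ℕ) (hn : 1 ≤ n) (R : ℝ) (hR : 0 < R) :
    ∑' v : {v : Fin n → (Fin d → ℤ) //
        (∑ i, v i = 0) ∧
        ∃ k : Fin n, R ≤ znorm (∑ i ∈ Finset.filter (fun i => i ≤ k) Finset.univ, v i)},
      ∏ i, p (v.1 i)
      ≤ n * Ml ^ n * (1 + R) ^ (-l) := by
  set q : (Fin d → ℤ) → ℝ := fun r => p r * (1 + znorm r) ^ l with hq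
  have hqnn : ∀ r, 0 ≤ q r := fun r => by
    apply mul_nonneg (hp r)
    apply Real.rpow_nonneg
    linarith [znorm_nonneg r]
  have hqsum : HasSum (fun v : Fin n → (Fin d → ℤ) => ∏ i, q (v i)) (Ml ^ n) :=
    hasSum_pi_prod q hqnn hMl n
  have hpsum : HasSum (fun v : Fin n → (Fin d → ℤ) => ∏ i, p (v i)) ((1 : ℝ) ^ n) :=
    hasSum_pi_prod p hp hprob n
  have hRl : (0 : ℝ) < (1 + R) ^ l := Real.rpow_pos_of_pos (by linarith) l
  -- pointwise bound on the subtype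
  have key : ∀ v : {v : Fin n → (Fin d → ℤ) //
      (∑ i, v i = 0) ∧
      ∃ k : Fin n, R ≤ znorm (∑ i ∈ Finset.filter (fun i => i ≤ k) Finset.univ, v i)},
      ∏ i, p (v.1 i) ≤ (1 + R) ^ (-l) * ∏ i, q (v.1 i) := by
    rintro ⟨v, hv0, k, hk⟩
    have h1 : (1 + R : ℝ) ≤ ∏ i, (1 + znorm (v i)) := by
      calc (1 + R : ℝ) ≤ 1 + znorm (∑ i ∈ Finset.filter (fun i => i ≤ k) Finset.univ, v i) := by
            linarith
        _ ≤ ∏ i ∈ Finset.filter (fun i => i ≤ k) Finset.univ, (1 + znorm (v i)) :=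
            one_add_znorm_sum_le v _
        _ ≤ ∏ i, (1 + znorm (v i)) := by
            rw [Finset.prod_filter]
            apply Finset.prod_le_prod
            · intro i _
              split_ifs
              · linarith [znorm_nonneg (v i)]
              · norm_num
            · intro i _
              split_ifs
              · exact le_rfl
              · linarith [znorm_nonneg (v i)]
    have h2 : (1 + R : ℝ) ^ l ≤ ∏ i, (1 + znorm (v i)) ^ l := by
      rw [Real.finset_prod_rpow _ _ (fun i _ => by linarith [znorm_nonneg (v i)]) l]
      exact Real.rpow_le_rpow (by linarith) h1 hl.le
    have h3 : (∏ i, p (v i)) * (1 + R) ^ l ≤ ∏ i, q (v i) := by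
      calc (∏ i, p (v i)) * (1 + R) ^ l ≤ (∏ i, p (v i)) * ∏ i, (1 + znorm (v i)) ^ l := by
            apply mul_le_mul_of_nonneg_left h2
            exact Finset.prod_nonneg fun i _ => hp _
        _ = ∏ i, q (v i) := by rw [← Finset.prod_mul_distrib]
    rw [Real.rpow_neg (by linarith), inv_mul_eq_div, le_div_iff₀ hRl]
    exact h3
  have hsub : (∑' v : {v : Fin n → (Fin d → ℤ) //
      (∑ i, v i = 0) ∧
      ∃ k : Fin n, R ≤ znorm (∑ i ∈ Finset.filter (fun i => i ≤ k) Finset.univ, v i)},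
      ∏ i, p (v.1 i)) ≤ ∑' v : Fin n → (Fin d → ℤ), (1 + R) ^ (-l) * ∏ i, q (v i) := by
    apply Summable.tsum_le_tsum_of_inj Subtype.val Subtype.val_injective
    · intro c _
      apply mul_nonneg (Real.rpow_nonneg (by linarith) _)
      exact Finset.prod_nonneg fun i _ => hqnn _
    · exact key
    · exact hpsum.summable.subtype _
    · exact hqsum.summable.mul_left _
  have heq : (∑' v : Fin n → (Fin d → ℤ), (1 + R) ^ (-l) * ∏ i, q (v i))
      = (1 + R) ^ (-l) * Ml ^ n := by
    rw [tsum_mul_left, hqsum.tsum_eq]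
  have hMl0 : 0 ≤ Ml := hMl.nonneg hqnn
  have hn1 : (1 : ℝ) ≤ n := by exact_mod_cast hn
  calc _ ≤ (1 + R) ^ (-l) * Ml ^ n := by rw [← heq]; exact hsub
    _ ≤ n * Ml ^ n * (1 + R) ^ (-l) := by
        have h := Real.rpow_nonneg (show (0:ℝ) ≤ 1 + R by linarith) (-l)
        calc (1 + R) ^ (-l) * Ml ^ n = Ml ^ n * (1 + R) ^ (-l) := mul_comm _ _
          _ ≤ n * (Ml ^ n * (1 + R) ^ (-l)) :=
              le_mul_of_one_le_left (mul_nonneg (pow_nonneg hMl0 n) h) hn1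
          _ = n * Ml ^ n * (1 + R) ^ (-l) := (mul_assoc _ _ _).symm
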